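/- In the ring of formal power series over ℚ in two variables X and Y, there is exactly one power series G satisfying G = 1 + X·G²·(G² + Y), and its coefficients are given explicitly by: the coefficient of X^a·Y^b in G equals C(a − b, b) = (4a − 2b)! / ((a − b)! · b! · (3a − 2b + 1)!) when b ≤ a, and 0 when b > a. -/

import Mathlib

/-!
Write `powSeries k` for the series whose coefficients are the conjectured closed form for the
coefficients of `G ^ k`. A factorial identity shows that these series satisfy the recurrence
`G^(k+1) = G^k + X·(G^(k+4) + Y·G^(k+2))` obtained by multiplying the equation by `G^k`.
For fixed `k`, the defects `powSeries k * powSeries j - powSeries (k + j)` satisfy the same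
recurrence in `j` and vanish at `j = 0`; since the factor `X` raises the order, they all vanish.
Hence `powSeries k = (powSeries 1) ^ k`, and `powSeries 1` solves the equation. Uniqueness holds
because the difference of two solutions is a multiple of itself by a series without constant term.
-/

open MvPowerSeries
open scoped Nat

namespace MvPowerSeries

variable {σ R : Type*} [CommSemiring R]

theorem eq_zero_of_eq_mul_self {f g : MvPowerSeries σ R} (hg : constantCoeff g = 0)
    (h : f = g * f) : f = 0 := by
  have hle : f.order + 1 ≤ f.order := calc
    f.order + 1 ≤ g.order + f.order := by
      rw [add_comm]; gcongr; exact one_le_order_iff_constCoeff_eq_zero.2 hg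
    _ ≤ (g * f).order := le_order_mul
    _ = f.order := by rw [← h]
  by_contra hf
  exact lt_irrefl _ ((ENat.add_one_le_iff (mt order_eq_top_iff.1 hf)).1 hle)

theorem eq_zero_of_succ_eq_add_mul {E : ℕ → MvPowerSeries σ R} {g h : MvPowerSeries σ R}
    {a b : ℕ} (hg : constantCoeff g = 0) (h0 : E 0 = 0)
    (hsucc : ∀ j, E (j + 1) = E j + g * (E (j + a) + h * E (j + b))) (j : ℕ) : E j = 0 := by
  set n := ⨅ i, (E i).order
  have hn : ∀ i, n ≤ (E i).order := iInf_le _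
  have hn_succ : ∀ i, n + 1 ≤ (E i).order := by
    intro i
    induction i with
    | zero => simp [h0]
    | succ i ih =>
      have hrest : n ≤ (E (i + a) + h * E (i + b)).order :=
        (le_min (hn _) ((hn _).trans (le_add_self.trans le_order_mul))).trans min_order_le_add
      have hmul : n + 1 ≤ (g * (E (i + a) + h * E (i + b))).order := calc
        n + 1 ≤ g.order + (E (i + a) + h * E (i + b)).order := by
          rw [add_comm]; gcongr; exact one_le_order_iff_constCoeff_eq_zero.2 hg
        _ ≤ _ := le_order_mul
      rw [hsucc]
      exact (le_min ih hmul).trans min_order_le_add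
  have htop : n = ⊤ := by
    by_contra hne
    exact lt_irrefl n ((ENat.add_one_le_iff hne).1 (le_iInf hn_succ))
  exact order_eq_top_iff.1 (top_le_iff.1 (htop ▸ hn j))

end MvPowerSeries

namespace Melonic

theorem eq_of_eq_one_add_mul {σ R : Type*} [CommRing R] {u v G H : MvPowerSeries σ R}
    (hu : constantCoeff u = 0) (hG : G = 1 + u * G ^ 2 * (G ^ 2 + v))
    (hH : H = 1 + u * H ^ 2 * (H ^ 2 + v)) : G = H := by
  have hfactor : G - H = u * ((G + H) * (G ^ 2 + H ^ 2) + v * (G + H)) * (G - H) := by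
    conv_lhs => rw [hG, hH]
    ring
  exact sub_eq_zero.1 (eq_zero_of_eq_mul_self (by simp [hu]) hfactor)

/-- The coefficient of `g^(p+q) μ^q` in `G^k`; the paper's `C(p,q)` is `powCoeff 1 p q`. -/
def powCoeff : ℕ → ℕ → ℕ → ℚ
  | 0, p, q => if p = 0 ∧ q = 0 then 1 else 0
  | k + 1, p, q => (k + 1) * (4 * p + 2 * q + k)! / (p ! * q ! * (3 * p + q + k + 1)!)

def shift {M : Type*} [Zero M] (i j : ℕ) (c : ℕ → ℕ → M) (p q : ℕ) : M :=
  if i ≤ p ∧ j ≤ q then c (p - i) (q - j) else 0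

theorem powCoeff_one (p q : ℕ) :
    powCoeff 1 p q = (4 * p + 2 * q)! / (p ! * q ! * (3 * p + q + 1)!) := by
  simp [powCoeff]

theorem powCoeff_succ_succ (k p q : ℕ) :
    powCoeff (k + 2) p q = powCoeff (k + 1) p q * ((k + 2) * (4 * p + 2 * q + k + 1)) /
      ((k + 1) * (3 * p + q + k + 2)) := by
  simp only [powCoeff, ← add_assoc, Nat.factorial_succ]
  push_cast
  field_simp
  ring

theorem shift_one_zero_powCoeff (k p q : ℕ) :
    shift 1 0 (powCoeff (k + 4)) p q =
      powCoeff (k + 1) p q * ((k + 4) * p) / ((k + 1) * (4 * p + 2 * q + k)) := by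
  rcases p with _ | p
  · simp [shift]
  · simp only [shift, powCoeff, zero_le, and_true, le_add_iff_nonneg_left, add_tsub_cancel_right,
      tsub_zero, if_true]
    rw [show 4 * (p + 1) + 2 * q + k = 4 * p + 2 * q + (k + 3) + 1 by ring,
      show 3 * (p + 1) + q + k + 1 = 3 * p + q + (k + 3) + 1 by ring,
      Nat.factorial_succ (4 * p + 2 * q + (k + 3)), Nat.factorial_succ p]
    push_cast
    field_simp
    ring

theorem shift_zero_one_powCoeff (k p q : ℕ) :
    shift 0 1 (powCoeff (k + 2)) p q =
      powCoeff (k + 1) p q * ((k + 2) * q) / ((k + 1) * (4 * p + 2 * q + k)) := by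
  rcases q with _ | q
  · simp [shift]
  · simp only [shift, powCoeff, zero_le, true_and, le_add_iff_nonneg_left, add_tsub_cancel_right,
      tsub_zero, if_true]
    rw [show 4 * p + 2 * (q + 1) + k = 4 * p + 2 * q + (k + 1) + 1 by ring,
      show 3 * p + (q + 1) + k + 1 = 3 * p + q + (k + 1) + 1 by ring,
      Nat.factorial_succ (4 * p + 2 * q + (k + 1)), Nat.factorial_succ q]
    push_cast
    field_simp
    ring

theorem powCoeff_succ (k p q : ℕ) :
    powCoeff (k + 1) p q =
      powCoeff k p q + shift 1 0 (powCoeff (k + 4)) p q + shift 0 1 (powCoeff (k + 2)) p q := by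
  rw [shift_one_zero_powCoeff, shift_zero_one_powCoeff]
  rcases k with _ | k
  · by_cases h : p = 0 ∧ q = 0
    · obtain ⟨rfl, rfl⟩ := h
      simp [powCoeff]
    · have : (4 * p + 2 * q : ℚ) ≠ 0 := by
        norm_cast; omega
      simp only [powCoeff, if_neg h]
      field_simp
      ring
  · rw [powCoeff_succ_succ k p q]
    field_simp
    push_cast
    ring

section toSeries

variable {R : Type*} [CommSemiring R]

/-- The series `∑ c p q · X^(p+q) Y^q`. -/
def toSeries (c : ℕ → ℕ → R) : MvPowerSeries (Fin 2) R :=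
  fun m => if m 1 ≤ m 0 then c (m 0 - m 1) (m 1) else 0

theorem coeff_toSeries (c : ℕ → ℕ → R) (a b : ℕ) :
    coeff (Finsupp.single 0 a + Finsupp.single 1 b) (toSeries c) =
      if b ≤ a then c (a - b) b else 0 := by
  simp [toSeries, coeff_apply]

theorem toSeries_add (c d : ℕ → ℕ → R) : toSeries (c + d) = toSeries c + toSeries d := by
  ext m
  simp only [toSeries, coeff_apply, map_add, Pi.add_apply]
  split_ifs <;> simp

theorem monomial_mul_toSeries (i j : ℕ) (c : ℕ → ℕ → R) :
    monomial (Finsupp.single 0 (i + j) + Finsupp.single 1 j) (1 : R) * toSeries c =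
      toSeries (shift i j c) := by
  ext m
  rw [coeff_monomial_mul, one_mul]
  simp only [toSeries, coeff_apply, shift, Finsupp.le_def, Fin.forall_fin_two, Finsupp.tsub_apply,
    Finsupp.add_apply, Finsupp.single_apply, ↓reduceIte, Fin.isValue, one_ne_zero, add_zero,
    zero_ne_one, zero_add, tsub_le_iff_right]
  split_ifs <;> first | rfl | omega | (congr 1; omega)

end toSeries

theorem toSeries_powCoeff_zero : toSeries (powCoeff 0) = (1 : MvPowerSeries (Fin 2) ℚ) := by
  ext m
  obtain ⟨a, b, rfl⟩ : ∃ a b, m = Finsupp.single 0 a + Finsupp.single 1 b :=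
    ⟨m 0, m 1, by ext i; fin_cases i <;> simp⟩
  rw [coeff_toSeries, coeff_one]
  simp only [powCoeff, add_eq_zero, Finsupp.single_eq_zero]
  split_ifs <;> first | rfl | omega

def powSeries (k : ℕ) : MvPowerSeries (Fin 2) ℚ := toSeries (powCoeff k)

theorem powSeries_zero : powSeries 0 = 1 := toSeries_powCoeff_zero

theorem powSeries_succ (k : ℕ) :
    powSeries (k + 1) = powSeries k + X 0 * (powSeries (k + 4) + X 1 * powSeries (k + 2)) := by
  have hX : (X 0 : MvPowerSeries (Fin 2) ℚ) =
      monomial (Finsupp.single 0 (1 + 0) + Finsupp.single 1 0) 1 := by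
    simp [X_def]
  have hXY : (X 0 * X 1 : MvPowerSeries (Fin 2) ℚ) =
      monomial (Finsupp.single 0 (0 + 1) + Finsupp.single 1 1) 1 := by
    simp [X_def, monomial_mul_monomial]
  rw [mul_add, ← mul_assoc, hXY, hX]
  simp only [powSeries, monomial_mul_toSeries, ← toSeries_add]
  congr
  funext p q
  rw [powCoeff_succ, add_assoc]
  rfl

theorem powSeries_mul (k j : ℕ) : powSeries k * powSeries j = powSeries (k + j) := by
  refine sub_eq_zero.1 <| eq_zero_of_succ_eq_add_mul
    (E := fun j ↦ powSeries k * powSeries j - powSeries (k + j)) (h := X 1) (a := 4) (b := 2)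
    (constantCoeff_X 0) (by simp [powSeries_zero]) (fun i ↦ ?_) j
  simp only [← Nat.add_assoc]
  rw [powSeries_succ i, powSeries_succ (k + i)]
  ring

theorem powSeries_eq_pow (k : ℕ) : powSeries k = powSeries 1 ^ k := by
  induction k with
  | zero => exact powSeries_zero
  | succ k ih => rw [← powSeries_mul, ih, pow_succ]

theorem powSeries_one_eq :
    powSeries 1 = 1 + X 0 * powSeries 1 ^ 2 * (powSeries 1 ^ 2 + X 1) := calc
  powSeries 1 = powSeries 0 + X 0 * (powSeries 4 + X 1 * powSeries 2) := powSeries_succ 0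
  _ = _ := by rw [powSeries_zero, powSeries_eq_pow 4, powSeries_eq_pow 2]; ring

end Melonic

theorem melonic_generating_function_unique :
    (∃! G : MvPowerSeries (Fin 2) ℚ,
        G = 1 + (X 0 : MvPowerSeries (Fin 2) ℚ) * G ^ 2 * (G ^ 2 + X 1)) ∧
      ∀ G : MvPowerSeries (Fin 2) ℚ,
        G = 1 + (X 0 : MvPowerSeries (Fin 2) ℚ) * G ^ 2 * (G ^ 2 + X 1) →
          ∀ a b : ℕ,
            MvPowerSeries.coeff (Finsupp.single 0 a + Finsupp.single 1 b) G =
              if b ≤ a then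
                (Nat.factorial (4 * a - 2 * b) : ℚ) /
                  ((Nat.factorial (a - b) : ℚ) * (Nat.factorial b : ℚ) *
                    (Nat.factorial (3 * a - 2 * b + 1) : ℚ))
              else 0 := by
  have huniq : ∀ G : MvPowerSeries (Fin 2) ℚ,
      G = 1 + X 0 * G ^ 2 * (G ^ 2 + X 1) → G = Melonic.powSeries 1 :=
    fun G hG ↦ Melonic.eq_of_eq_one_add_mul (constantCoeff_X 0) hG Melonic.powSeries_one_eq
  refine ⟨⟨Melonic.powSeries 1, Melonic.powSeries_one_eq, huniq⟩, fun G hG a b ↦ ?_⟩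
  rw [huniq G hG, Melonic.powSeries, Melonic.coeff_toSeries]
  split_ifs
  · rw [Melonic.powCoeff_one, show 4 * (a - b) + 2 * b = 4 * a - 2 * b by omega,
      show 3 * (a - b) + b + 1 = 3 * a - 2 * b + 1 by omega]
  · rfl
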